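/- Let s > 0 and y₀ ∈ ℝ, and let c₁ ≤ c₂ be real numbers such that both parameter triples (y₀, s, c₁) and (y₀, s, c₂) are admissible for the tanh-formula, i.e. (1 − 1/s)² − 4c_i/s > 0 and |2y₀ − (1 − 1/s)| < √((1 − 1/s)² − 4c_i/s) for i = 1, 2. Then for all t ≥ 0, T(t | y₀, s, c₂) ≤ T(t | y₀, s, c₁): the tanh-formula is pointwise nonincreasing in the parameter c on [0, ∞). -/

import Mathlib

/-
With `a = 2y₀ − (1 − 1/s)`, `Ξ = √((1 − 1/s)² − 4c/s)` and `θ = sΞt/2`, the tanh-formula is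
`2T − (1 − 1/s) = Ξ tanh(θ + artanh(a/Ξ))`. Increasing `c` decreases `Ξ`, hence `θ` when `t ≥ 0`,
and `tanh` is increasing, so it suffices that `Ξ ↦ Ξ tanh(θ + artanh(a/Ξ))` increases on `(|a|, ∞)`
for fixed `θ ≥ 0`. By the addition formula this is `Ξ(Ξτ + a)/(Ξ + aτ)` with `τ = tanh θ ∈ [0, 1)`;
for `Ξ₂ ≤ Ξ₁`, clearing denominators leaves `τ(Ξ₁ − Ξ₂)(a² + Ξ₁Ξ₂ + aτ(Ξ₁ + Ξ₂))`, and the last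
factor is at least `(Ξ₁ − |a|)(Ξ₂ − |a|) ≥ 0`.
-/

/-- The real inverse hyperbolic tangent, `arctanh x = ½ log((1+x)/(1-x))`,
defined for `x ∈ (-1, 1)`. -/
noncomputable def arctanh (x : ℝ) : ℝ := (1 / 2) * Real.log ((1 + x) / (1 - x))

/-- The tanh-formula `T(t | y₀, s, c)`. -/
noncomputable def tanhFormula (y₀ s c t : ℝ) : ℝ :=
  (1 / 2) * (1 - 1 / s) +
    (Real.sqrt ((1 - 1 / s) ^ 2 - 4 * c / s) / 2) *
      Real.tanh ((s * Real.sqrt ((1 - 1 / s) ^ 2 - 4 * c / s) / 2) * t +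
        arctanh ((2 * y₀ - (1 - 1 / s)) / Real.sqrt ((1 - 1 / s) ^ 2 - 4 * c / s)))

namespace Real

theorem tanh_le_tanh {x y : ℝ} : tanh x ≤ tanh y ↔ x ≤ y := by
  rw [← artanh_le_artanh_iff ⟨neg_one_lt_tanh x, tanh_lt_one x⟩
    ⟨neg_one_lt_tanh y, tanh_lt_one y⟩, artanh_tanh, artanh_tanh]

theorem tanh_nonneg {x : ℝ} (hx : 0 ≤ x) : 0 ≤ tanh x := by
  simpa only [tanh_zero] using tanh_le_tanh.2 hx

theorem tanh_add (x y : ℝ) : tanh (x + y) = (tanh x + tanh y) / (1 + tanh x * tanh y) := by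
  have hx := cosh_pos x
  have hy := cosh_pos y
  have hxy : 0 < cosh x * cosh y + sinh x * sinh y := cosh_add x y ▸ cosh_pos (x + y)
  rw [tanh_eq_sinh_div_cosh, tanh_eq_sinh_div_cosh, tanh_eq_sinh_div_cosh, sinh_add, cosh_add]
  field_simp

theorem tanh_add_artanh (x : ℝ) {u : ℝ} (hu : u ∈ Set.Ioo (-1) 1) :
    tanh (x + artanh u) = (tanh x + u) / (1 + tanh x * u) := by
  rw [tanh_add, tanh_artanh hu]

end Real

open Real

theorem arctanh_eq_artanh {x : ℝ} (hx : x ∈ Set.Icc (-1) 1) : arctanh x = artanh x :=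
  (artanh_eq_half_log hx).symm

theorem mul_tanh_add_arctanh_div {a Ξ : ℝ} (ha : |a| < Ξ) (x : ℝ) :
    Ξ * tanh (x + arctanh (a / Ξ)) = Ξ * (Ξ * tanh x + a) / (Ξ + a * tanh x) := by
  have hΞ : 0 < Ξ := (abs_nonneg a).trans_lt ha
  have hu : a / Ξ ∈ Set.Ioo (-1) 1 := by
    rw [Set.mem_Ioo, ← abs_lt, abs_div, abs_of_pos hΞ, div_lt_one hΞ]
    exact ha
  have hden : 0 < Ξ + a * tanh x := by
    nlinarith [abs_lt.1 ha, neg_one_lt_tanh x, tanh_lt_one x]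
  rw [arctanh_eq_artanh (Set.Ioo_subset_Icc_self hu), tanh_add_artanh x hu]
  field_simp

theorem mul_mul_add_div_add_mul_le {a T Ξ₁ Ξ₂ : ℝ} (hT₀ : 0 ≤ T) (hT₁ : T ≤ 1)
    (ha : |a| < Ξ₂) (hΞ : Ξ₂ ≤ Ξ₁) :
    Ξ₂ * (Ξ₂ * T + a) / (Ξ₂ + a * T) ≤ Ξ₁ * (Ξ₁ * T + a) / (Ξ₁ + a * T) := by
  have haT : -|a| ≤ a * T := by
    cases abs_cases a <;> nlinarith
  have hK : 0 ≤ a ^ 2 + Ξ₁ * Ξ₂ + a * T * (Ξ₁ + Ξ₂) := by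
    have hΞ₂ : 0 ≤ Ξ₂ := (abs_nonneg a).trans ha.le
    nlinarith [sq_abs a, mul_nonneg (sub_nonneg.2 (ha.le.trans hΞ)) (sub_nonneg.2 ha.le),
      mul_le_mul_of_nonneg_right haT (by linarith : 0 ≤ Ξ₁ + Ξ₂)]
  rw [div_le_div_iff₀ (by linarith) (by linarith)]
  nlinarith [mul_nonneg (mul_nonneg hT₀ (sub_nonneg.2 hΞ)) hK]

theorem mul_tanh_add_arctanh_div_le {a x₁ x₂ Ξ₁ Ξ₂ : ℝ} (hx₂ : 0 ≤ x₂) (hx : x₂ ≤ x₁)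
    (ha : |a| < Ξ₂) (hΞ : Ξ₂ ≤ Ξ₁) :
    Ξ₂ * tanh (x₂ + arctanh (a / Ξ₂)) ≤ Ξ₁ * tanh (x₁ + arctanh (a / Ξ₁)) := by
  have hΞ₂ : 0 < Ξ₂ := (abs_nonneg a).trans_lt ha
  calc Ξ₂ * tanh (x₂ + arctanh (a / Ξ₂))
      ≤ Ξ₂ * tanh (x₁ + arctanh (a / Ξ₂)) := by gcongr; exact tanh_le_tanh.2 (by linarith)
    _ = Ξ₂ * (Ξ₂ * tanh x₁ + a) / (Ξ₂ + a * tanh x₁) := mul_tanh_add_arctanh_div ha x₁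
    _ ≤ Ξ₁ * (Ξ₁ * tanh x₁ + a) / (Ξ₁ + a * tanh x₁) :=
      mul_mul_add_div_add_mul_le (tanh_nonneg (hx₂.trans hx)) (tanh_lt_one x₁).le ha hΞ
    _ = Ξ₁ * tanh (x₁ + arctanh (a / Ξ₁)) := (mul_tanh_add_arctanh_div (ha.trans_le hΞ) x₁).symm

theorem tanh_formula_antitone_in_c_general (s y₀ c₁ c₂ : ℝ) (hs : 0 < s)
    (hc : c₁ ≤ c₂)
    (hy₀₂ : |2 * y₀ - (1 - 1 / s)| < Real.sqrt ((1 - 1 / s) ^ 2 - 4 * c₂ / s)) :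
    ∀ t : ℝ, 0 ≤ t → tanhFormula y₀ s c₂ t ≤ tanhFormula y₀ s c₁ t := by
  intro t ht
  have hΞ : √((1 - 1 / s) ^ 2 - 4 * c₂ / s) ≤ √((1 - 1 / s) ^ 2 - 4 * c₁ / s) := by
    gcongr
  have key := mul_tanh_add_arctanh_div_le (by positivity)
    (by gcongr : s * √((1 - 1 / s) ^ 2 - 4 * c₂ / s) / 2 * t
      ≤ s * √((1 - 1 / s) ^ 2 - 4 * c₁ / s) / 2 * t) hy₀₂ hΞ
  unfold tanhFormula
  linarith

/-- The tanh-formula is pointwise nonincreasing in the parameter `c` on `[0, ∞)`: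
for admissible `c₁ ≤ c₂`, `T(t | y₀, s, c₂) ≤ T(t | y₀, s, c₁)` for all `t ≥ 0`. -/
theorem tanh_formula_antitone_in_c (s y₀ c₁ c₂ : ℝ) (hs : 0 < s)
    (hc : c₁ ≤ c₂)
    (hdisc₁ : 0 < (1 - 1 / s) ^ 2 - 4 * c₁ / s)
    (hy₀₁ : |2 * y₀ - (1 - 1 / s)| < Real.sqrt ((1 - 1 / s) ^ 2 - 4 * c₁ / s))
    (hdisc₂ : 0 < (1 - 1 / s) ^ 2 - 4 * c₂ / s)
    (hy₀₂ : |2 * y₀ - (1 - 1 / s)| < Real.sqrt ((1 - 1 / s) ^ 2 - 4 * c₂ / s)) :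
    ∀ t : ℝ, 0 ≤ t → tanhFormula y₀ s c₂ t ≤ tanhFormula y₀ s c₁ t :=
  tanh_formula_antitone_in_c_general s y₀ c₁ c₂ hs hc hy₀₂
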